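/- Assume b ∈ A(ri(dom(∑_{i=1}^s f_i))) and that problem (P) has at least one solution. Let α_i > 0 (i = 1,…,s) and β > 0, let ℳ = {M_0, M_1, M_2} be (n+m) × (n+m) matrices with T_ℳ well-defined, and let {v^k} be generated by the two-step scheme v^{k+1} = T_ℳ(v^k, v^{k−1}) from given v^0, v^1 ∈ ℝ^{n+m}. If ℳ satisfies Condition-M, then {v^k} converges to a fixed point of 𝒯 ∘ E, and, writing v^k = (x^k, y^k) with x^k ∈ ℝ^n, the sequence {x^k} converges to a solution of problem (P). -/

import Mathlib

/-!
Write `v = (x, y)` and `Φ(x, y) = ∑ f_i(x_i) + ⟨y, b⟩`. The relation `w = 𝒯(ζ)` is the subgradient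
inclusion `R(ζ - w) ∈ ∂Φ(w)`, and `R(E - I) = S_A` is skew, so the fixed points of `𝒯 ∘ E` are the
saddle points of the Lagrangian of (P); the relative-interior condition yields a Lagrange multiplier
by a separation argument, hence a saddle point. Adding the subgradient inequalities of one step and
of a saddle point `z`, the skew part `S_A` drops out, and with `H = M₀ + M₂`,
`ρ = ‖H^{-1/2} M₂ H^{-1/2}‖ < 1/2` the function
`½‖v^{k+1} - z‖²_H - ⟨M₂(v^{k+1} - v^k), v^{k+1} - z⟩ + (ρ/2)‖v^{k+1} - v^k‖²_H`
decreases by `(½ - ρ)‖v^{k+2} - v^{k+1}‖²_H` while dominating `((1 - ρ)/2)‖v^{k+1} - z‖²_H`.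
Hence the iterates are bounded with vanishing steps, every cluster point is a fixed point of
`𝒯 ∘ E` (the graph of a prox is closed), and the Lyapunov function relative to a cluster point
tends to `0`.
-/

open Matrix Filter Topology

noncomputable section

/-- Spectral norm (largest singular value) of a real matrix. -/
def specNorm {p q : Type*} [Fintype p] [Fintype q] [DecidableEq q]
    (M : Matrix p q ℝ) : ℝ :=
  ‖LinearMap.toContinuousLinearMap (Matrix.toEuclideanLin M)‖

/-- The positive semidefinite square root of a positive semidefinite matrix
(the definition of `Matrix.PosSemidef.sqrt` in the older Mathlib). -/
def psdSqrt {n : Type*} [Fintype n] [DecidableEq n] {A : Matrix n n ℝ}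
    (hA : A.PosSemidef) : Matrix n n ℝ :=
  hA.1.eigenvectorUnitary.1 * diagonal ((↑) ∘ Real.sqrt ∘ hA.1.eigenvalues) *
    (star hA.1.eigenvectorUnitary : Matrix n n ℝ)

/-- Condition-M for a triple of matrices: `M0 = M1 + M2`, `H := M0 + M2` is symmetric
positive definite, and `‖H^{-1/2} M2 H^{-1/2}‖₂ < 1/2` (here `H^{-1/2}` is the positive
semidefinite square root of `H⁻¹`). -/
def ConditionM {d : Type*} [Fintype d] [DecidableEq d] (M0 M1 M2 : Matrix d d ℝ) : Prop :=
  M0 = M1 + M2 ∧ ∃ hH : (M0 + M2).PosDef,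
    specNorm (psdSqrt hH.inv.posSemidef * M2 * psdSqrt hH.inv.posSemidef) < 1 / 2

/-- The cost functional defining the proximity operator `prox_{φ,H}` at input `x`. -/
def proxCost {ι : Type*} [Fintype ι] (φ : (ι → ℝ) → EReal) (H : Matrix ι ι ℝ)
    (x u : ι → ℝ) : EReal :=
  ((((1 : ℝ) / 2) * ((u - x) ⬝ᵥ H.mulVec (u - x)) : ℝ) : EReal) + φ u

/-- `p = prox_{φ,H}(x)`: `p` is the unique minimizer of the prox cost. -/
def IsProx {ι : Type*} [Fintype ι] (φ : (ι → ℝ) → EReal) (H : Matrix ι ι ℝ)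
    (x p : ι → ℝ) : Prop :=
  (∀ u, proxCost φ H x p ≤ proxCost φ H x u) ∧
  ∀ q, (∀ u, proxCost φ H x q ≤ proxCost φ H x u) → q = p

/-- Proper lower semicontinuous convex extended-real-valued function. -/
def ProperConvexLsc {ι : Type*} [Fintype ι] (f : (ι → ℝ) → EReal) : Prop :=
  (∃ x, f x ≠ ⊤) ∧ (∀ x, f x ≠ ⊥) ∧ LowerSemicontinuous f ∧
  ∀ x y : ι → ℝ, ∀ t : ℝ, 0 < t → t < 1 →
    f (t • x + (1 - t) • y) ≤ (t : EReal) * f x + ((1 - t : ℝ) : EReal) * f y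

/-- Scaling of an extended-real-valued function by a real constant. -/
def smulF {V : Type*} (c : ℝ) (φ : V → EReal) : V → EReal := fun u => (c : EReal) * φ u

/-- The conjugate of the indicator of `C = {b}`: `ι_C*(y) = ⟨y, b⟩`. -/
def iotaCstar {m : ℕ} (b : Fin m → ℝ) : (Fin m → ℝ) → EReal :=
  fun y => ((y ⬝ᵥ b : ℝ) : EReal)

variable {s m : ℕ} {n : Fin s → ℕ}

/-- Index type for the concatenated variable `x = (x_1, …, x_s)`. -/
abbrev XIdx (n : Fin s → ℕ) := (i : Fin s) × Fin (n i)

/-- Index type for the full variable `v = (x, y)`. -/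
abbrev FIdx (n : Fin s → ℕ) (m : ℕ) := XIdx n ⊕ Fin m

/-- The `i`-th block of a concatenated vector. -/
def blk (x : XIdx n → ℝ) (i : Fin s) : Fin (n i) → ℝ := fun j => x ⟨i, j⟩

/-- The matrix `A = [A_1 … A_s]`. -/
def bigA (A : ∀ i : Fin s, Matrix (Fin m) (Fin (n i)) ℝ) : Matrix (Fin m) (XIdx n) ℝ :=
  Matrix.of fun r p => A p.1 r p.2

/-- The separable objective `∑ f_i(x_i)`. -/
def objSum (f : ∀ i : Fin s, (Fin (n i) → ℝ) → EReal) (x : XIdx n → ℝ) : EReal :=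
  ∑ i, f i (blk x i)

/-- `∑ A_i x_i`. -/
def sumAx (A : ∀ i : Fin s, Matrix (Fin m) (Fin (n i)) ℝ) (x : XIdx n → ℝ) : Fin m → ℝ :=
  ∑ i, (A i).mulVec (blk x i)

/-- `x` is a solution of problem (P). -/
def IsSolution (f : ∀ i : Fin s, (Fin (n i) → ℝ) → EReal)
    (A : ∀ i : Fin s, Matrix (Fin m) (Fin (n i)) ℝ) (b : Fin m → ℝ)
    (x : XIdx n → ℝ) : Prop :=
  sumAx A x = b ∧ ∀ z : XIdx n → ℝ, sumAx A z = b → objSum f x ≤ objSum f z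

/-- `b ∈ A(ri(dom(∑ f_i)))` where `ri` is the relative (intrinsic) interior. -/
def RiCond (f : ∀ i : Fin s, (Fin (n i) → ℝ) → EReal)
    (A : ∀ i : Fin s, Matrix (Fin m) (Fin (n i)) ℝ) (b : Fin m → ℝ) : Prop :=
  b ∈ (fun x => sumAx A x) '' intrinsicInterior ℝ {x : XIdx n → ℝ | objSum f x ≠ ⊤}

/-- The `x`-part of a full vector. -/
def xpart (v : FIdx n m → ℝ) : XIdx n → ℝ := fun p => v (Sum.inl p)

/-- The `y`-part of a full vector. -/
def ypart (v : FIdx n m → ℝ) : Fin m → ℝ := fun r => v (Sum.inr r)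

/-- The function `Φ(x_1,…,x_s,y) = ∑ f_i(x_i) + ι_C*(y)`. -/
def PhiFun (f : ∀ i : Fin s, (Fin (n i) → ℝ) → EReal) (b : Fin m → ℝ)
    (v : FIdx n m → ℝ) : EReal :=
  objSum f (xpart v) + iotaCstar b (ypart v)

/-- The diagonal matrix `R = diag((β/α_1)I, …, (β/α_s)I, (1/β)I)`. -/
def Rmat (α : Fin s → ℝ) (β : ℝ) : Matrix (FIdx n m) (FIdx n m) ℝ :=
  Matrix.diagonal (Sum.elim (fun p : XIdx n => β / α p.1) fun _ => 1 / β)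

/-- The inverse `R⁻¹` of the diagonal matrix `R`. -/
def Rinv (α : Fin s → ℝ) (β : ℝ) : Matrix (FIdx n m) (FIdx n m) ℝ :=
  Matrix.diagonal (Sum.elim (fun p : XIdx n => α p.1 / β) fun _ => β)

/-- The expansive matrix `E = [[I, −P⁻¹Aᵀ],[βA, I]]`. -/
def Emat (A : ∀ i : Fin s, Matrix (Fin m) (Fin (n i)) ℝ) (α : Fin s → ℝ) (β : ℝ) :
    Matrix (FIdx n m) (FIdx n m) ℝ :=
  Matrix.fromBlocks 1 (-(Matrix.diagonal (fun p : XIdx n => α p.1 / β) * (bigA A)ᵀ))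
    (β • bigA A) 1

/-- The skew-symmetric matrix `S_A = [[0, −Aᵀ],[A, 0]]`. -/
def SAmat (A : ∀ i : Fin s, Matrix (Fin m) (Fin (n i)) ℝ) :
    Matrix (FIdx n m) (FIdx n m) ℝ :=
  Matrix.fromBlocks 0 (-(bigA A)ᵀ) (bigA A) 0

/-- `w = 𝒯(v)`, where `𝒯(x_1,…,x_s,y) = (prox_{(α_1/β)f_1}x_1, …, prox_{(α_s/β)f_s}x_s,
prox_{β ι_C*}y)`. -/
def isT (f : ∀ i : Fin s, (Fin (n i) → ℝ) → EReal) (b : Fin m → ℝ)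
    (α : Fin s → ℝ) (β : ℝ) (v w : FIdx n m → ℝ) : Prop :=
  (∀ i, IsProx (smulF (α i / β) (f i)) 1 (blk (xpart v) i) (blk (xpart w) i)) ∧
  IsProx (smulF β (iotaCstar b)) 1 (ypart v) (ypart w)

/-- `w = T_ℳ(u₁, u₂)`, i.e. `w = 𝒯((E − R⁻¹M₀)w + R⁻¹M₁u₁ + R⁻¹M₂u₂)`. -/
def isTM (f : ∀ i : Fin s, (Fin (n i) → ℝ) → EReal)
    (A : ∀ i : Fin s, Matrix (Fin m) (Fin (n i)) ℝ) (b : Fin m → ℝ)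
    (α : Fin s → ℝ) (β : ℝ) (M0 M1 M2 : Matrix (FIdx n m) (FIdx n m) ℝ)
    (u1 u2 w : FIdx n m → ℝ) : Prop :=
  isT f b α β ((Emat A α β - Rinv α β * M0).mulVec w + (Rinv α β * M1).mulVec u1
    + (Rinv α β * M2).mulVec u2) w

/-- `T_ℳ` is well-defined. -/
def TMWellDefined (f : ∀ i : Fin s, (Fin (n i) → ℝ) → EReal)
    (A : ∀ i : Fin s, Matrix (Fin m) (Fin (n i)) ℝ) (b : Fin m → ℝ)
    (α : Fin s → ℝ) (β : ℝ) (M0 M1 M2 : Matrix (FIdx n m) (FIdx n m) ℝ) : Prop :=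
  ∀ u1 u2 : FIdx n m → ℝ, ∃! w, isTM f A b α β M0 M1 M2 u1 u2 w

section Prox

variable {ι : Type*} [Fintype ι]

lemma dotProduct_self_nonneg (v : ι → ℝ) : 0 ≤ v ⬝ᵥ v :=
  Finset.sum_nonneg fun i _ => mul_self_nonneg (v i)

lemma sub_dotProduct_sub_eq (x p u : ι → ℝ) :
    (u - x) ⬝ᵥ (u - x) = (p - x) ⬝ᵥ (p - x) + 2 * ((p - x) ⬝ᵥ (u - p)) + (u - p) ⬝ᵥ (u - p) := by
  have h : u - x = (p - x) + (u - p) := by abel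
  rw [h, add_dotProduct, dotProduct_add, dotProduct_add, dotProduct_comm (u - p) (p - x)]
  ring

theorem ConvexOn.le_add_dotProduct_of_forall_le {D : Set (ι → ℝ)} {g : (ι → ℝ) → ℝ}
    (hg : ConvexOn ℝ D g) {x p : ι → ℝ} (hp : p ∈ D)
    (hmin : ∀ u ∈ D, (p - x) ⬝ᵥ (p - x) / 2 + g p ≤ (u - x) ⬝ᵥ (u - x) / 2 + g u) :
    ∀ u ∈ D, g p + (x - p) ⬝ᵥ (u - p) ≤ g u := by
  intro u hu
  -- compare `p` with the points `p + t (u - p)` of the segment, then let `t → 0⁺`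
  have hseg : ∀ t ∈ Set.Ioo (0 : ℝ) 1,
      0 ≤ (p - x) ⬝ᵥ (u - p) + g u - g p + t * ((u - p) ⬝ᵥ (u - p) / 2) := by
    rintro t ⟨ht0, ht1⟩
    have hconv := hg.2 hu hp ht0.le (sub_pos.2 ht1).le (by ring)
    have hmem := hg.1 hu hp ht0.le (sub_pos.2 ht1).le (by ring)
    have hsub : t • u + (1 - t) • p - p = t • (u - p) := by module
    have h := hmin _ hmem
    rw [sub_dotProduct_sub_eq x p (t • u + (1 - t) • p), hsub] at h
    simp only [dotProduct_smul, smul_dotProduct, smul_eq_mul] at h hconv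
    refine (mul_nonneg_iff_of_pos_left ht0).1 ?_
    linarith
  have hlim : Tendsto (fun t : ℝ => (p - x) ⬝ᵥ (u - p) + g u - g p + t * ((u - p) ⬝ᵥ (u - p) / 2))
      (𝓝[>] 0) (𝓝 ((p - x) ⬝ᵥ (u - p) + g u - g p)) := by
    have h : Continuous fun t : ℝ =>
        (p - x) ⬝ᵥ (u - p) + g u - g p + t * ((u - p) ⬝ᵥ (u - p) / 2) := by fun_prop
    simpa using (h.tendsto 0).mono_left nhdsWithin_le_nhds
  have hK := ge_of_tendsto hlim (Filter.mem_of_superset (Ioo_mem_nhdsGT one_pos) hseg)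
  have hneg : (x - p) ⬝ᵥ (u - p) = -((p - x) ⬝ᵥ (u - p)) := by
    rw [← neg_dotProduct, neg_sub]
  linarith

lemma add_dotProduct_le_of_le_add_dotProduct {g : (ι → ℝ) → ℝ} {x p u : ι → ℝ}
    (h : g p + (x - p) ⬝ᵥ (u - p) ≤ g u) :
    (p - x) ⬝ᵥ (p - x) / 2 + g p + (u - p) ⬝ᵥ (u - p) / 2 ≤ (u - x) ⬝ᵥ (u - x) / 2 + g u := by
  have hneg : (x - p) ⬝ᵥ (u - p) = -((p - x) ⬝ᵥ (u - p)) := by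
    rw [← neg_dotProduct, neg_sub]
  rw [sub_dotProduct_sub_eq x p u]
  linarith

end Prox

section ProperConvexLsc

variable {ι : Type*} [Fintype ι] {f : (ι → ℝ) → EReal}

lemma ProperConvexLsc.coe_toReal (hf : ProperConvexLsc f) {x : ι → ℝ} (hx : f x ≠ ⊤) :
    ((f x).toReal : EReal) = f x :=
  EReal.coe_toReal hx (hf.2.1 x)

lemma ProperConvexLsc.le_coe_add (hf : ProperConvexLsc f) {x y : ι → ℝ} (hx : f x ≠ ⊤)
    (hy : f y ≠ ⊤) {a b : ℝ} (ha : 0 ≤ a) (hb : 0 ≤ b) (hab : a + b = 1) :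
    f (a • x + b • y) ≤ ((a * (f x).toReal + b * (f y).toReal : ℝ) : EReal) := by
  rcases ha.eq_or_lt with rfl | ha
  · simp_all [hf.coe_toReal hy]
  rcases hb.eq_or_lt with rfl | hb
  · simp_all [hf.coe_toReal hx]
  have h := hf.2.2.2 x y a ha (by linarith)
  rwa [show 1 - a = b by linarith, ← hf.coe_toReal hx, ← hf.coe_toReal hy, ← EReal.coe_mul,
    ← EReal.coe_mul, ← EReal.coe_add] at h

lemma ProperConvexLsc.convexOn_toReal (hf : ProperConvexLsc f) :
    ConvexOn ℝ {x | f x ≠ ⊤} fun x => (f x).toReal := by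
  refine ⟨fun x hx y hy a b ha hb hab => ?_, fun x hx y hy a b ha hb hab => ?_⟩
  · exact ne_top_of_le_ne_top (EReal.coe_ne_top _) (hf.le_coe_add hx hy ha hb hab)
  · have h := hf.le_coe_add hx hy ha hb hab
    show (f _).toReal ≤ a * (f x).toReal + b * (f y).toReal
    rw [← EReal.toReal_coe (a * _ + _)]
    exact EReal.toReal_le_toReal h (hf.2.1 _) (EReal.coe_ne_top _)

variable [DecidableEq ι]

lemma proxCost_smulF_of_ne_top (hf : ProperConvexLsc f) (c : ℝ) {x u : ι → ℝ} (hu : f u ≠ ⊤) :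
    proxCost (smulF c f) 1 x u = (((u - x) ⬝ᵥ (u - x) / 2 + c * (f u).toReal : ℝ) : EReal) := by
  rw [proxCost, smulF, one_mulVec, EReal.coe_add, EReal.coe_mul c, hf.coe_toReal hu]
  congr 2
  ring

lemma proxCost_smulF_of_eq_top {c : ℝ} (hc : 0 < c) {x u : ι → ℝ} (hu : f u = ⊤) :
    proxCost (smulF c f) 1 x u = ⊤ := by
  rw [proxCost, smulF, hu, EReal.mul_top_of_pos (by exact_mod_cast hc)]
  exact EReal.add_top_of_ne_bot (EReal.coe_ne_bot _)

theorem isProx_smulF_iff (hf : ProperConvexLsc f) {c : ℝ} (hc : 0 < c) (x p : ι → ℝ) :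
    IsProx (smulF c f) 1 x p ↔
      f p ≠ ⊤ ∧ ∀ u, f u ≠ ⊤ → (f p).toReal + c⁻¹ * ((x - p) ⬝ᵥ (u - p)) ≤ (f u).toReal := by
  have hcg := hf.convexOn_toReal.smul hc.le
  have hscale : ∀ {u}, (f p).toReal + c⁻¹ * ((x - p) ⬝ᵥ (u - p)) ≤ (f u).toReal ↔
      c * (f p).toReal + (x - p) ⬝ᵥ (u - p) ≤ c * (f u).toReal := by
    intro u
    rw [← mul_le_mul_iff_of_pos_left hc, mul_add, ← mul_assoc, mul_inv_cancel₀ hc.ne', one_mul]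
  constructor
  · rintro ⟨hmin, -⟩
    obtain ⟨z, hz⟩ := hf.1
    have hp : f p ≠ ⊤ := fun hp => by
      have h := hmin z
      rw [proxCost_smulF_of_eq_top hc hp, proxCost_smulF_of_ne_top hf c hz, top_le_iff] at h
      exact EReal.coe_ne_top _ h
    refine ⟨hp, fun u hu => hscale.2 (hcg.le_add_dotProduct_of_forall_le hp (fun u hu => ?_) u hu)⟩
    have h := hmin u
    rwa [proxCost_smulF_of_ne_top hf c hp, proxCost_smulF_of_ne_top hf c hu,
      EReal.coe_le_coe_iff] at h
  · rintro ⟨hp, hsub⟩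
    have hlow : ∀ u, f u ≠ ⊤ → (p - x) ⬝ᵥ (p - x) / 2 + c * (f p).toReal + (u - p) ⬝ᵥ (u - p) / 2
        ≤ (u - x) ⬝ᵥ (u - x) / 2 + c * (f u).toReal := fun u hu =>
      add_dotProduct_le_of_le_add_dotProduct (g := fun u => c * (f u).toReal) (hscale.1 (hsub u hu))
    refine ⟨fun u => ?_, fun q hq => ?_⟩
    · by_cases hu : f u = ⊤
      · rw [proxCost_smulF_of_eq_top hc hu]; exact le_top
      · rw [proxCost_smulF_of_ne_top hf c hp, proxCost_smulF_of_ne_top hf c hu,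
          EReal.coe_le_coe_iff]
        linarith [hlow u hu, dotProduct_self_nonneg (u - p)]
    · have hqp := hq p
      have hq : f q ≠ ⊤ := fun hq' => by
        rw [proxCost_smulF_of_eq_top hc hq', proxCost_smulF_of_ne_top hf c hp, top_le_iff] at hqp
        exact EReal.coe_ne_top _ hqp
      rw [proxCost_smulF_of_ne_top hf c hp, proxCost_smulF_of_ne_top hf c hq,
        EReal.coe_le_coe_iff] at hqp
      have h0 : (q - p) ⬝ᵥ (q - p) ≤ 0 := by linarith [hlow q hq]
      exact sub_eq_zero.1 (dotProduct_self_eq_zero.1 (h0.antisymm (dotProduct_self_nonneg _)))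

end ProperConvexLsc

section ProxLimits

variable {ι : Type*} [Fintype ι] [DecidableEq ι] {f : (ι → ℝ) → EReal}

theorem isProx_smulF_of_tendsto (hf : ProperConvexLsc f) {c : ℝ} (hc : 0 < c)
    {x p : ℕ → ι → ℝ} {x₀ p₀ : ι → ℝ} (h : ∀ k, IsProx (smulF c f) 1 (x k) (p k))
    (hx : Tendsto x atTop (𝓝 x₀)) (hp : Tendsto p atTop (𝓝 p₀)) :
    IsProx (smulF c f) 1 x₀ p₀ := by
  simp only [isProx_smulF_iff hf hc] at h ⊢
  have hlim : ∀ u, f u ≠ ⊤ →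
      f p₀ ≤ (((f u).toReal - c⁻¹ * ((x₀ - p₀) ⬝ᵥ (u - p₀)) : ℝ) : EReal) := by
    intro u hu
    have hF : Continuous fun q : (ι → ℝ) × (ι → ℝ) =>
        (q.2, (((f u).toReal - c⁻¹ * ((q.1 - q.2) ⬝ᵥ (u - q.2)) : ℝ) : EReal)) :=
      continuous_snd.prodMk (continuous_coe_real_ereal.comp (by fun_prop))
    refine hf.2.2.1.isClosed_epigraph.mem_of_tendsto
      ((hF.tendsto (x₀, p₀)).comp (hx.prodMk_nhds hp)) (Eventually.of_forall fun k => ?_)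
    change f (p k) ≤ (((f u).toReal - c⁻¹ * ((x k - p k) ⬝ᵥ (u - p k)) : ℝ) : EReal)
    rw [← hf.coe_toReal (h k).1, EReal.coe_le_coe_iff]
    linarith [(h k).2 u hu]
  have hp₀ : f p₀ ≠ ⊤ := ne_top_of_le_ne_top (EReal.coe_ne_top _) (hlim (p 0) (h 0).1)
  refine ⟨hp₀, fun u hu => ?_⟩
  have h' := hlim u hu
  rw [← hf.coe_toReal hp₀, EReal.coe_le_coe_iff] at h'
  linarith

end ProxLimits

lemma properConvexLsc_iotaCstar {m : ℕ} (b : Fin m → ℝ) : ProperConvexLsc (iotaCstar b) := by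
  refine ⟨⟨0, EReal.coe_ne_top _⟩, fun _ => EReal.coe_ne_bot _,
    (continuous_coe_real_ereal.comp (by fun_prop)).lowerSemicontinuous, fun x y t _ _ => ?_⟩
  rw [iotaCstar, iotaCstar, iotaCstar, ← EReal.coe_mul, ← EReal.coe_mul, ← EReal.coe_add,
    add_dotProduct, smul_dotProduct, smul_dotProduct]
  rfl

lemma isProx_smulF_iotaCstar_iff {m : ℕ} (b : Fin m → ℝ) {β : ℝ} (hβ : 0 < β) (x p : Fin m → ℝ) :
    IsProx (smulF β (iotaCstar b)) 1 x p ↔ x - p = β • b := by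
  simp only [isProx_smulF_iff (properConvexLsc_iotaCstar b) hβ, iotaCstar, EReal.toReal_coe,
    ne_eq, EReal.coe_ne_top, not_false_eq_true, forall_const, true_and]
  constructor
  · intro h
    have hw := h (p + (x - p - β • b))
    rw [add_sub_cancel_left, add_dotProduct, add_le_add_iff_left, inv_mul_le_iff₀ hβ] at hw
    have h0 : (x - p - β • b) ⬝ᵥ (x - p - β • b) ≤ 0 := by
      rw [sub_dotProduct (x - p), smul_dotProduct, smul_eq_mul, dotProduct_comm b]
      linarith
    exact sub_eq_zero.1 (dotProduct_self_eq_zero.1 (h0.antisymm (dotProduct_self_nonneg _)))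
  · intro h u
    rw [h, smul_dotProduct, smul_eq_mul, inv_mul_cancel_left₀ hβ.ne', dotProduct_sub,
      dotProduct_comm b u, dotProduct_comm b p]
    linarith

lemma EReal.coe_finset_sum {α : Type*} (s : Finset α) (g : α → ℝ) :
    ((∑ i ∈ s, g i : ℝ) : EReal) = ∑ i ∈ s, (g i : EReal) :=
  map_sum (⟨⟨(↑), EReal.coe_zero⟩, EReal.coe_add⟩ : ℝ →+ EReal) g s

section Objective

variable {f : ∀ i : Fin s, (Fin (n i) → ℝ) → EReal}

/-- `toReal` sends `⊤` to `0`, so this agrees with `objSum f` only on the effective domain. -/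
def objReal (f : ∀ i : Fin s, (Fin (n i) → ℝ) → EReal) (x : XIdx n → ℝ) : ℝ :=
  ∑ i, (f i (blk x i)).toReal

lemma objSum_eq_coe (hf : ∀ i, ProperConvexLsc (f i)) {x : XIdx n → ℝ}
    (hx : ∀ i, f i (blk x i) ≠ ⊤) : objSum f x = objReal f x := by
  rw [objReal, EReal.coe_finset_sum]
  exact Finset.sum_congr rfl fun i _ => ((hf i).coe_toReal (hx i)).symm

lemma objSum_ne_top_iff (hf : ∀ i, ProperConvexLsc (f i)) {x : XIdx n → ℝ} :
    objSum f x ≠ ⊤ ↔ ∀ i, f i (blk x i) ≠ ⊤ := by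
  refine ⟨fun h i hi => h ?_, fun h => by rw [objSum_eq_coe hf h]; exact EReal.coe_ne_top _⟩
  rw [objSum, ← Finset.add_sum_erase _ _ (Finset.mem_univ i), hi]
  refine EReal.top_add_of_ne_bot (ne_bot_of_le_ne_bot (EReal.coe_ne_bot
    (∑ j ∈ Finset.univ.erase i, (f j (blk x j)).toReal)) ?_)
  rw [EReal.coe_finset_sum]
  exact Finset.sum_le_sum fun j _ => EReal.coe_toReal_le ((hf j).2.1 _)

lemma convexOn_objReal (hf : ∀ i, ProperConvexLsc (f i)) :
    ConvexOn ℝ {x | objSum f x ≠ ⊤} (objReal f) := by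
  have hdom : {x | objSum f x ≠ ⊤} = {x : XIdx n → ℝ | ∀ i, f i (blk x i) ≠ ⊤} :=
    Set.ext fun x => objSum_ne_top_iff hf
  rw [hdom]
  refine ⟨fun x hx y hy a b ha hb hab i => (hf i).convexOn_toReal.1 (hx i) (hy i) ha hb hab,
    fun x hx y hy a b ha hb hab => ?_⟩
  calc objReal f (a • x + b • y)
      ≤ ∑ i, (a * (f i (blk x i)).toReal + b * (f i (blk y i)).toReal) :=
        Finset.sum_le_sum fun i _ => (hf i).convexOn_toReal.2 (hx i) (hy i) ha hb hab
    _ = a • objReal f x + b • objReal f y := by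
        simp only [objReal, Finset.sum_add_distrib, Finset.mul_sum, smul_eq_mul]

end Objective

section LagrangeMultiplier

lemma exists_pos_add_smul_mem_of_mem_intrinsicInterior {V : Type*} [NormedAddCommGroup V]
    [NormedSpace ℝ V] {D : Set V} {x d : V} (hx : x ∈ intrinsicInterior ℝ D)
    (hd : d ∈ (affineSpan ℝ D).direction) : ∃ c > (0 : ℝ), x + c • d ∈ D := by
  obtain ⟨y, hy, rfl⟩ := mem_intrinsicInterior.1 hx
  let γ : ℝ → affineSpan ℝ D := fun t =>
    ⟨t • d + y, AffineSubspace.vadd_mem_of_mem_direction (Submodule.smul_mem _ t hd) y.2⟩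
  have hγ : Continuous γ :=
    (continuous_id.smul continuous_const |>.add continuous_const).subtype_mk _
  have hγ0 : γ 0 = y := Subtype.ext (by simp [γ])
  have hev : ∀ᶠ t in 𝓝[>] 0, γ t ∈ interior ((↑) ⁻¹' D) :=
    ((hγ.tendsto 0).mono_left nhdsWithin_le_nhds).eventually (hγ0 ▸ isOpen_interior.mem_nhds hy)
  obtain ⟨t, ht, ht0⟩ := (hev.and self_mem_nhdsWithin).exists
  exact ⟨t, ht0, by simpa [γ, add_comm] using interior_subset ht⟩

variable {E : Type*} [NormedAddCommGroup E] [NormedSpace ℝ E]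

lemma Convex.exists_le_of_notMem {K : Set E} (hK : Convex ℝ K) (hint : (interior K).Nonempty)
    {x : E} (hx : x ∉ K) : ∃ F : E →L[ℝ] ℝ, (∀ q ∈ K, F q ≤ F x) ∧ ∃ q ∈ K, F q < F x := by
  obtain ⟨F, hF⟩ := geometric_hahn_banach_open_point hK.interior isOpen_interior
    fun h => hx (interior_subset h)
  refine ⟨F, fun q hq => ?_, hint.imp fun q hq => ⟨interior_subset hq, hF q hq⟩⟩
  have hcl : K ⊆ closure (interior K) := by
    rw [hK.closure_interior_eq_closure_of_nonempty_interior hint]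
    exact subset_closure
  exact closure_minimal (fun a ha => (hF a ha).le) (isClosed_le F.continuous continuous_const)
    (hcl hq)

variable [FiniteDimensional ℝ E] {K : Set (E × ℝ)}

lemma Convex.interior_nonempty_of_forall_exists_smul_mem (hK : Convex ℝ K)
    (hup : ∀ q ∈ K, ∀ t, 0 ≤ t → (q.1, q.2 + t) ∈ K)
    (hcore : ∀ w, ∃ c > (0 : ℝ), ∃ r, (c • w, r) ∈ K) :
    (interior K).Nonempty := by
  obtain ⟨c₀, -, r₀, h₀⟩ := hcore 0
  rw [smul_zero] at h₀
  rw [hK.interior_nonempty_iff_affineSpan_eq_top,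
    ← AffineSubspace.direction_eq_top_iff_of_nonempty ⟨_, subset_affineSpan ℝ K h₀⟩, eq_top_iff]
  set T := (affineSpan ℝ K).direction
  have hsub : ∀ {q q'}, q ∈ K → q' ∈ K → q - q' ∈ T := fun hq hq' => by
    simpa using AffineSubspace.vsub_mem_direction (subset_affineSpan ℝ K hq)
      (subset_affineSpan ℝ K hq')
  have hvert : ((0 : E), (1 : ℝ)) ∈ T := by simpa using hsub (hup _ h₀ 1 zero_le_one) h₀
  have hhor : ∀ w : E, (w, (0 : ℝ)) ∈ T := by
    intro w
    obtain ⟨c, hc, r, hr⟩ := hcore w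
    have h := T.sub_mem (hsub hr h₀) (T.smul_mem (r - r₀) hvert)
    rw [show (c • w, r) - ((0 : E), r₀) - (r - r₀) • ((0 : E), (1 : ℝ)) = c • (w, (0 : ℝ)) by
      ext <;> simp] at h
    simpa [hc.ne'] using T.smul_mem c⁻¹ h
  rintro ⟨w, r⟩ -
  simpa using T.add_mem (hhor w) (T.smul_mem r hvert)

/-- `hcore` (`0` is in the core of the projection of `K`) is what makes the supporting hyperplane
at `(0, p)` non-vertical. -/
theorem Convex.exists_nonvertical_support (hK : Convex ℝ K)
    (hup : ∀ q ∈ K, ∀ t, 0 ≤ t → (q.1, q.2 + t) ∈ K)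
    (hcore : ∀ w, ∃ c > (0 : ℝ), ∃ r, (c • w, r) ∈ K)
    {p : ℝ} (hp : ((0 : E), p) ∉ K) : ∃ ℓ : E →L[ℝ] ℝ, ∀ q ∈ K, p + ℓ q.1 ≤ q.2 := by
  obtain ⟨F, hFK, q₁, hq₁K, hq₁⟩ :=
    hK.exists_le_of_notMem (hK.interior_nonempty_of_forall_exists_smul_mem hup hcore) hp
  set ℓ := F.comp (ContinuousLinearMap.inl ℝ E ℝ)
  set γ := F ((0 : E), (1 : ℝ))
  have hF : ∀ q : E × ℝ, F q = ℓ q.1 + q.2 * γ := fun q => by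
    conv_lhs => rw [show q = (q.1, 0) + q.2 • ((0 : E), (1 : ℝ)) by ext <;> simp]
    rw [map_add, map_smul, smul_eq_mul]
    rfl
  have hFK' : ∀ q ∈ K, ℓ q.1 + q.2 * γ ≤ p * γ := fun q hq => by
    simpa [hF] using hFK q hq
  have hγle : γ ≤ 0 := by
    by_contra! hγ
    set X := p * γ - ℓ q₁.1 - q₁.2 * γ
    have h : ℓ q₁.1 + (q₁.2 + (|X| + 1) / γ) * γ ≤ p * γ :=
      hFK' _ (hup _ hq₁K _ (by positivity))
    rw [add_mul, div_mul_cancel₀ _ hγ.ne'] at h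
    linarith [le_abs_self X]
  have hγ : γ < 0 := by
    refine hγle.lt_of_ne fun hγ0 => ?_
    obtain ⟨c, hc, r, hr⟩ := hcore (-q₁.1)
    have h1 := hFK' _ hr
    rw [hF, hF] at hq₁
    simp only [map_smul, map_neg, hγ0, mul_zero, add_zero, map_zero, smul_eq_mul] at h1 hq₁
    nlinarith
  refine ⟨(-γ)⁻¹ • ℓ, fun q hq => ?_⟩
  have h := hFK' q hq
  have key : q.2 - (p + (-γ)⁻¹ * ℓ q.1) = (-γ)⁻¹ * ((q.2 - p) * (-γ) - ℓ q.1) := by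
    field_simp [hγ.ne]
    ring
  rw [FunLike.coe_smul, Pi.smul_apply, smul_eq_mul, ← sub_nonneg, key]
  exact mul_nonneg (inv_nonneg.2 (by linarith)) (by linarith)

theorem ConvexOn.exists_lagrange_multiplier {V W : Type*} [NormedAddCommGroup V] [NormedSpace ℝ V]
    [NormedAddCommGroup W] [NormedSpace ℝ W] [FiniteDimensional ℝ W] {D : Set V} {G : V → ℝ}
    (hG : ConvexOn ℝ D G) (L : V →ₗ[ℝ] W) {b : W} (hslater : ∃ x ∈ intrinsicInterior ℝ D, L x = b)
    {x₀ : V} (hmin : ∀ x ∈ D, L x = b → G x₀ ≤ G x) :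
    ∃ y : W →ₗ[ℝ] ℝ, ∀ x ∈ D, G x₀ + y (L x - b) ≤ G x := by
  obtain ⟨x₁, hx₁, hLx₁⟩ := hslater
  set S := (affineSpan ℝ D).direction.map L
  have hS : ∀ x ∈ D, L x - b ∈ S := by
    intro x hx
    refine ⟨x - x₁, ?_, by simp [hLx₁]⟩
    simpa using AffineSubspace.vsub_mem_direction (subset_affineSpan ℝ D hx)
      (subset_affineSpan ℝ D (intrinsicInterior_subset hx₁))
  set K : Set (S × ℝ) := {q | ∃ x ∈ D, (q.1 : W) = L x - b ∧ G x < q.2}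
  have hK : Convex ℝ K := by
    rintro q ⟨x, hx, hqx, hGx⟩ q' ⟨x', hx', hqx', hGx'⟩ a a' ha ha' haa'
    obtain ⟨hmem, hlt⟩ := hG.convex_strict_epigraph (show (x, q.2) ∈ _ from ⟨hx, hGx⟩)
      (show (x', q'.2) ∈ _ from ⟨hx', hGx'⟩) ha ha' haa'
    refine ⟨a • x + a' • x', hmem, ?_, hlt⟩
    have hb : b = a • b + a' • b := by rw [← add_smul, haa', one_smul]
    simp only [Prod.fst_add, Prod.smul_fst, Submodule.coe_add, Submodule.coe_smul, hqx, hqx',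
      map_add, map_smul]
    conv_rhs => rw [hb]
    module
  have hup : ∀ q ∈ K, ∀ t, 0 ≤ t → (q.1, q.2 + t) ∈ K := fun q ⟨x, hx, h1, h2⟩ t ht =>
    ⟨x, hx, h1, by simp only; linarith⟩
  have hcore : ∀ w : S, ∃ c > (0 : ℝ), ∃ r, (c • w, r) ∈ K := by
    rintro ⟨_, d, hd, rfl⟩
    obtain ⟨c, hc, hmem⟩ := exists_pos_add_smul_mem_of_mem_intrinsicInterior hx₁ hd
    exact ⟨c, hc, G (x₁ + c • d) + 1, x₁ + c • d, hmem, by simp [hLx₁], by simp⟩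
  have hp : ((0 : S), G x₀) ∉ K := fun ⟨x, hx, h0, hlt⟩ =>
    (hmin x hx (sub_eq_zero.1 (by simpa using h0.symm))).not_gt hlt
  obtain ⟨ℓ, hℓ⟩ := hK.exists_nonvertical_support hup hcore hp
  obtain ⟨y, hy⟩ := LinearMap.exists_extend (ℓ : S →ₗ[ℝ] ℝ)
  refine ⟨y, fun x hx => le_of_forall_pos_le_add fun ε hε => ?_⟩
  have h := hℓ (⟨L x - b, hS x hx⟩, G x + ε) ⟨x, hx, rfl, by simp only; linarith⟩
  have hyx : y (L x - b) = ℓ ⟨L x - b, hS x hx⟩ := LinearMap.congr_fun hy ⟨L x - b, hS x hx⟩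
  simp only at h
  linarith

end LagrangeMultiplier

section SpectralNorm

variable {d : Type*} [Fintype d]

lemma inner_toLp_toLp (a b : d → ℝ) :
    inner ℝ (WithLp.toLp 2 a : EuclideanSpace ℝ d) (WithLp.toLp 2 b) = a ⬝ᵥ b := by
  simp [EuclideanSpace.inner_eq_star_dotProduct, dotProduct_comm]

lemma norm_toLp_sq (a : d → ℝ) : ‖(WithLp.toLp 2 a : EuclideanSpace ℝ d)‖ ^ 2 = a ⬝ᵥ a := by
  rw [EuclideanSpace.real_norm_sq_eq]
  simp [dotProduct, sq]

lemma dotProduct_mulVec_eq_of_mul_self {H P : Matrix d d ℝ} (hP : Pᵀ = P) (hPP : P * P = H)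
    (x : d → ℝ) : x ⬝ᵥ H *ᵥ x = P *ᵥ x ⬝ᵥ P *ᵥ x := by
  rw [← hPP, ← mulVec_mulVec, dotProduct_mulVec, ← mulVec_transpose, hP]

lemma Matrix.PosDef.dotProduct_mulVec_self_nonneg {H : Matrix d d ℝ} (hH : H.PosDef) (x : d → ℝ) :
    0 ≤ x ⬝ᵥ H *ᵥ x := by
  simpa using hH.posSemidef.dotProduct_mulVec_nonneg x

variable [DecidableEq d]

lemma norm_toLp_mulVec_le (N : Matrix d d ℝ) (a : d → ℝ) :
    ‖(WithLp.toLp 2 (N *ᵥ a) : EuclideanSpace ℝ d)‖ ≤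
      specNorm N * ‖(WithLp.toLp 2 a : EuclideanSpace ℝ d)‖ := by
  simpa [specNorm, Matrix.toLpLin_apply] using
    (LinearMap.toContinuousLinearMap (Matrix.toEuclideanLin N)).le_opNorm (WithLp.toLp 2 a)

lemma mulVec_dotProduct_le_specNorm (N : Matrix d d ℝ) (a b : d → ℝ) :
    N *ᵥ a ⬝ᵥ b ≤ specNorm N / 2 * (a ⬝ᵥ a + b ⬝ᵥ b) := by
  set a' : EuclideanSpace ℝ d := WithLp.toLp 2 a
  set b' : EuclideanSpace ℝ d := WithLp.toLp 2 b
  have hCS := (real_inner_le_norm (WithLp.toLp 2 (N *ᵥ a) : EuclideanSpace ℝ d) b').trans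
    (mul_le_mul_of_nonneg_right (norm_toLp_mulVec_le N a) (norm_nonneg b'))
  rw [inner_toLp_toLp] at hCS
  rw [← norm_toLp_sq a, ← norm_toLp_sq b]
  have hN : 0 ≤ specNorm N := norm_nonneg _
  nlinarith [mul_le_mul_of_nonneg_left (two_mul_le_add_sq ‖a'‖ ‖b'‖) hN]

lemma norm_sq_le_specNorm_sq (N : Matrix d d ℝ) (a : d → ℝ) :
    ‖N *ᵥ a‖ ^ 2 ≤ specNorm N ^ 2 * (a ⬝ᵥ a) := by
  have hsup : ‖N *ᵥ a‖ ≤ ‖(WithLp.toLp 2 (N *ᵥ a) : EuclideanSpace ℝ d)‖ :=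
    pi_norm_le_iff_of_nonneg (norm_nonneg _) |>.2 fun i =>
      PiLp.norm_apply_le (WithLp.toLp 2 (N *ᵥ a)) i
  rw [← norm_toLp_sq, ← mul_pow]
  exact pow_le_pow_left₀ (norm_nonneg _) (hsup.trans (norm_toLp_mulVec_le N a)) 2

lemma psdSqrt_mul_self {A : Matrix d d ℝ} (hA : A.PosSemidef) : psdSqrt hA * psdSqrt hA = A := by
  have hs := hA.1.spectral_theorem
  rw [Unitary.conjStarAlgAut_apply] at hs
  have hUU := Unitary.coe_star_mul_self hA.1.eigenvectorUnitary
  unfold psdSqrt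
  conv_rhs => rw [hs]
  have e : diagonal (((↑) ∘ Real.sqrt ∘ hA.1.eigenvalues : d → ℝ)) *
      diagonal ((↑) ∘ Real.sqrt ∘ hA.1.eigenvalues) =
        diagonal (RCLike.ofReal ∘ hA.1.eigenvalues) := by
    rw [diagonal_mul_diagonal]; congr 1; funext i
    simp [Real.mul_self_sqrt (hA.eigenvalues_nonneg i)]
  rw [← e]
  simp only [mul_assoc]
  rw [← mul_assoc (star _ : Matrix d d ℝ) (hA.1.eigenvectorUnitary : Matrix d d ℝ), hUU, one_mul]

lemma psdSqrt_transpose {A : Matrix d d ℝ} (hA : A.PosSemidef) : (psdSqrt hA)ᵀ = psdSqrt hA := by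
  rw [← Matrix.conjTranspose_eq_transpose_of_trivial]
  unfold psdSqrt
  rw [Matrix.conjTranspose_mul, Matrix.conjTranspose_mul, Matrix.diagonal_conjTranspose]
  simp only [← Matrix.star_eq_conjTranspose, star_star, star_trivial, mul_assoc]

namespace Matrix.PosDef

variable {H : Matrix d d ℝ}

lemma exists_sqrt_of_psdSqrt_inv (hH : H.PosDef) :
    ∃ P : Matrix d d ℝ, Pᵀ = P ∧ P * P = H ∧ psdSqrt hH.inv.posSemidef * P = 1 := by
  set Q := psdSqrt hH.inv.posSemidef
  have hQQ : Q * Q = H⁻¹ := psdSqrt_mul_self _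
  have hdet : IsUnit Q.det := by
    have h : IsUnit (Q * Q).det := by
      rw [hQQ]; exact isUnit_iff_ne_zero.2 hH.inv.det_pos.ne'
    rw [det_mul] at h
    exact isUnit_of_mul_isUnit_left h
  refine ⟨Q⁻¹, by rw [transpose_nonsing_inv, psdSqrt_transpose], ?_, mul_nonsing_inv Q hdet⟩
  rw [← mul_inv_rev, hQQ, nonsing_inv_nonsing_inv H (isUnit_iff_ne_zero.2 hH.det_pos.ne')]

lemma mulVec_dotProduct_le (hH : H.PosDef) (M : Matrix d d ℝ) (z e : d → ℝ) :
    M *ᵥ z ⬝ᵥ e ≤ specNorm (psdSqrt hH.inv.posSemidef * M * psdSqrt hH.inv.posSemidef) / 2 *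
      (z ⬝ᵥ H *ᵥ z + e ⬝ᵥ H *ᵥ e) := by
  obtain ⟨P, hP, hPP, hQP⟩ := hH.exists_sqrt_of_psdSqrt_inv
  set Q := psdSqrt hH.inv.posSemidef
  have hPQ : P * Q = 1 := mul_eq_one_comm.1 hQP
  have h : (Q * M * Q) *ᵥ (P *ᵥ z) ⬝ᵥ P *ᵥ e = M *ᵥ z ⬝ᵥ e := by
    rw [mulVec_mulVec, mul_assoc, mul_assoc, hQP, mul_one, dotProduct_mulVec, ← mulVec_transpose,
      hP, mulVec_mulVec, ← mul_assoc, hPQ, one_mul]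
  rw [← h, dotProduct_mulVec_eq_of_mul_self hP hPP z, dotProduct_mulVec_eq_of_mul_self hP hPP e]
  exact mulVec_dotProduct_le_specNorm _ _ _

lemma norm_sq_le (hH : H.PosDef) (x : d → ℝ) :
    ‖x‖ ^ 2 ≤ specNorm (psdSqrt hH.inv.posSemidef) ^ 2 * (x ⬝ᵥ H *ᵥ x) := by
  obtain ⟨P, hP, hPP, hQP⟩ := hH.exists_sqrt_of_psdSqrt_inv
  have h := norm_sq_le_specNorm_sq (psdSqrt hH.inv.posSemidef) (P *ᵥ x)
  rwa [mulVec_mulVec, hQP, one_mulVec, ← dotProduct_mulVec_eq_of_mul_self hP hPP] at h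

lemma tendsto_zero_of_tendsto_dotProduct_mulVec (hH : H.PosDef) {x : ℕ → d → ℝ}
    (h : Tendsto (fun k => x k ⬝ᵥ H *ᵥ x k) atTop (𝓝 0)) : Tendsto x atTop (𝓝 0) := by
  rw [tendsto_zero_iff_norm_tendsto_zero]
  have hsq : Tendsto (fun k => ‖x k‖ ^ 2) atTop (𝓝 0) :=
    squeeze_zero (fun k => sq_nonneg _) (fun k => hH.norm_sq_le (x k))
      (by simpa using h.const_mul _)
  simpa [Real.sqrt_sq (norm_nonneg _)] using hsq.sqrt

end Matrix.PosDef

end SpectralNorm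

section TwoStepScheme

variable {d : Type*} [Fintype d]

lemma tendsto_zero_of_add_mul_le {G D : ℕ → ℝ} {c : ℝ} (hc : 0 < c) (hG : ∀ k, 0 ≤ G k)
    (hD : ∀ k, 0 ≤ D k) (h : ∀ k, G (k + 1) + c * D k ≤ G k) : Tendsto D atTop (𝓝 0) := by
  have hsum : ∀ K, ∑ k ∈ Finset.range K, D k ≤ G 0 / c := by
    intro K
    have htel : c * ∑ k ∈ Finset.range K, D k ≤ G 0 - G K := by
      rw [Finset.mul_sum, ← neg_le_neg_iff, neg_sub, ← Finset.sum_range_sub G K,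
        ← Finset.sum_neg_distrib]
      exact Finset.sum_le_sum fun k _ => by linarith [h k]
    rw [le_div_iff₀ hc, mul_comm]
    linarith [hG K]
  exact (summable_of_sum_range_le hD hsum).tendsto_atTop_zero

/-- The Lyapunov function of the two-step scheme relative to `z`, evaluated at consecutive iterates
`a = v^{k+1}`, `a' = v^k`. -/
def lyapunov (H M₂ : Matrix d d ℝ) (ρ : ℝ) (z a a' : d → ℝ) : ℝ :=
  (a - z) ⬝ᵥ H *ᵥ (a - z) / 2 - M₂ *ᵥ (a - a') ⬝ᵥ (a - z) + ρ / 2 * ((a - a') ⬝ᵥ H *ᵥ (a - a'))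

variable {H M₁ M₂ : Matrix d d ℝ} {ρ : ℝ}

lemma lyapunov_succ_add_le (hH : H.PosDef) (hM₁ : M₁ = H - M₂ - M₂)
    (hM₂ : ∀ a b, M₂ *ᵥ a ⬝ᵥ b ≤ ρ / 2 * (a ⬝ᵥ H *ᵥ a + b ⬝ᵥ H *ᵥ b)) {z u₀ u₁ u₂ : d → ℝ}
    (hstep : 0 ≤ (M₁ *ᵥ (u₁ - u₂) + M₂ *ᵥ (u₀ - u₂)) ⬝ᵥ (u₂ - z)) :
    lyapunov H M₂ ρ z u₂ u₁ + (1 / 2 - ρ) * ((u₂ - u₁) ⬝ᵥ H *ᵥ (u₂ - u₁)) ≤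
      lyapunov H M₂ ρ z u₁ u₀ := by
  rw [lyapunov, lyapunov]
  set e := u₁ - z
  set δ := u₂ - u₁
  set δ' := u₁ - u₀
  have he : u₂ - z = e + δ := by simp only [e, δ]; abel
  have h₁ : u₁ - u₂ = -δ := by simp only [δ]; abel
  have h₀ : u₀ - u₂ = -(δ + δ') := by simp only [δ, δ']; abel
  have hsymm : δ ⬝ᵥ H *ᵥ e = e ⬝ᵥ H *ᵥ δ := by
    rw [dotProduct_mulVec, ← mulVec_transpose, ← conjTranspose_eq_transpose_of_trivial,
      hH.isHermitian.eq, dotProduct_comm]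
  have hAM := hM₂ δ' (-δ)
  rw [h₁, h₀, he, hM₁] at hstep
  rw [he]
  simp only [mulVec_add, mulVec_neg, sub_mulVec, add_dotProduct, dotProduct_add, neg_dotProduct,
    dotProduct_neg, sub_dotProduct, neg_neg] at hstep hAM ⊢
  linarith [dotProduct_comm (H *ᵥ δ) e, dotProduct_comm (H *ᵥ δ) δ]

lemma le_lyapunov (hM₂ : ∀ a b, M₂ *ᵥ a ⬝ᵥ b ≤ ρ / 2 * (a ⬝ᵥ H *ᵥ a + b ⬝ᵥ H *ᵥ b))
    (z a a' : d → ℝ) : (1 - ρ) / 2 * ((a - z) ⬝ᵥ H *ᵥ (a - z)) ≤ lyapunov H M₂ ρ z a a' := by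
  have := hM₂ (a - a') (a - z)
  rw [lyapunov]
  linarith

lemma tendsto_add_of_tendsto_sub {E : Type*} [NormedAddCommGroup E] {v : ℕ → E}
    (hv : Tendsto (fun k => v (k + 1) - v k) atTop (𝓝 0)) {φ : ℕ → ℕ}
    (hφ : Tendsto φ atTop atTop) {z : E} (h : Tendsto (v ∘ φ) atTop (𝓝 z)) (m : ℕ) :
    Tendsto (fun j => v (φ j + m)) atTop (𝓝 z) := by
  induction m with
  | zero => exact h
  | succ m ih =>
    simpa [← add_assoc] using ih.add (hv.comp ((tendsto_add_atTop_nat m).comp hφ))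

section Convergence

variable {v : ℕ → d → ℝ} {z : d → ℝ}

lemma lyapunov_nonneg (hH : H.PosDef) (hρ : ρ < 1 / 2)
    (hM₂ : ∀ a b, M₂ *ᵥ a ⬝ᵥ b ≤ ρ / 2 * (a ⬝ᵥ H *ᵥ a + b ⬝ᵥ H *ᵥ b)) (a a' : d → ℝ) :
    0 ≤ lyapunov H M₂ ρ z a a' := by
  have := le_lyapunov hM₂ z a a'
  have := hH.dotProduct_mulVec_self_nonneg (a - z)
  nlinarith

lemma antitone_lyapunov (hH : H.PosDef) (hρ : ρ < 1 / 2) (hM₁ : M₁ = H - M₂ - M₂)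
    (hM₂ : ∀ a b, M₂ *ᵥ a ⬝ᵥ b ≤ ρ / 2 * (a ⬝ᵥ H *ᵥ a + b ⬝ᵥ H *ᵥ b))
    (hstep : ∀ k,
      0 ≤ (M₁ *ᵥ (v (k + 1) - v (k + 2)) + M₂ *ᵥ (v k - v (k + 2))) ⬝ᵥ (v (k + 2) - z)) :
    Antitone fun k => lyapunov H M₂ ρ z (v (k + 1)) (v k) :=
  antitone_nat_of_succ_le fun k => by
    have := lyapunov_succ_add_le hH hM₁ hM₂ (hstep k)
    have := hH.dotProduct_mulVec_self_nonneg (v (k + 2) - v (k + 1))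
    nlinarith

lemma dotProduct_mulVec_le_lyapunov (hρ : ρ < 1 / 2)
    (hM₂ : ∀ a b, M₂ *ᵥ a ⬝ᵥ b ≤ ρ / 2 * (a ⬝ᵥ H *ᵥ a + b ⬝ᵥ H *ᵥ b)) (a a' : d → ℝ) :
    (a - z) ⬝ᵥ H *ᵥ (a - z) ≤ 2 / (1 - ρ) * lyapunov H M₂ ρ z a a' := by
  have := le_lyapunov hM₂ z a a'
  rw [div_mul_eq_mul_div, le_div_iff₀ (by linarith)]
  linarith

variable [DecidableEq d]

lemma tendsto_succ_sub_of_lyapunov (hH : H.PosDef) (hρ : ρ < 1 / 2) (hM₁ : M₁ = H - M₂ - M₂)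
    (hM₂ : ∀ a b, M₂ *ᵥ a ⬝ᵥ b ≤ ρ / 2 * (a ⬝ᵥ H *ᵥ a + b ⬝ᵥ H *ᵥ b))
    (hstep : ∀ k,
      0 ≤ (M₁ *ᵥ (v (k + 1) - v (k + 2)) + M₂ *ᵥ (v k - v (k + 2))) ⬝ᵥ (v (k + 2) - z)) :
    Tendsto (fun k => v (k + 1) - v k) atTop (𝓝 0) := by
  have h := tendsto_zero_of_add_mul_le (G := fun k => lyapunov H M₂ ρ z (v (k + 1)) (v k))
    (D := fun k => (v (k + 2) - v (k + 1)) ⬝ᵥ H *ᵥ (v (k + 2) - v (k + 1))) (sub_pos.2 hρ)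
    (fun k => lyapunov_nonneg hH hρ hM₂ _ _)
    (fun k => hH.dotProduct_mulVec_self_nonneg (v (k + 2) - v (k + 1)))
    (fun k => lyapunov_succ_add_le hH hM₁ hM₂ (hstep k))
  exact (tendsto_add_atTop_iff_nat 1).1 (hH.tendsto_zero_of_tendsto_dotProduct_mulVec h)

lemma isBounded_range_of_lyapunov (hH : H.PosDef) (hρ : ρ < 1 / 2) (hM₁ : M₁ = H - M₂ - M₂)
    (hM₂ : ∀ a b, M₂ *ᵥ a ⬝ᵥ b ≤ ρ / 2 * (a ⬝ᵥ H *ᵥ a + b ⬝ᵥ H *ᵥ b))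
    (hstep : ∀ k,
      0 ≤ (M₁ *ᵥ (v (k + 1) - v (k + 2)) + M₂ *ᵥ (v k - v (k + 2))) ⬝ᵥ (v (k + 2) - z)) :
    Bornology.IsBounded (Set.range v) := by
  set B := specNorm (psdSqrt hH.inv.posSemidef) ^ 2 *
    (2 / (1 - ρ) * lyapunov H M₂ ρ z (v 1) (v 0))
  refine (Metric.isBounded_closedBall (x := z) (r := max ‖v 0 - z‖ √B)).subset ?_
  rintro _ ⟨_ | k, rfl⟩
  · simp [dist_eq_norm]
  rw [Metric.mem_closedBall, dist_eq_norm]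
  refine le_max_of_le_right (Real.le_sqrt_of_sq_le ((hH.norm_sq_le _).trans
    (mul_le_mul_of_nonneg_left ((dotProduct_mulVec_le_lyapunov hρ hM₂ _ (v k)).trans ?_)
      (sq_nonneg _))))
  exact mul_le_mul_of_nonneg_left (antitone_lyapunov hH hρ hM₁ hM₂ hstep (Nat.zero_le k))
    (div_nonneg zero_le_two (by linarith))

lemma tendsto_of_tendsto_subseq_of_lyapunov (hH : H.PosDef) (hρ : ρ < 1 / 2)
    (hM₁ : M₁ = H - M₂ - M₂) (hM₂ : ∀ a b, M₂ *ᵥ a ⬝ᵥ b ≤ ρ / 2 * (a ⬝ᵥ H *ᵥ a + b ⬝ᵥ H *ᵥ b))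
    (hstep : ∀ k,
      0 ≤ (M₁ *ᵥ (v (k + 1) - v (k + 2)) + M₂ *ᵥ (v k - v (k + 2))) ⬝ᵥ (v (k + 2) - z))
    {φ : ℕ → ℕ} (hφ : StrictMono φ) (h₀ : Tendsto (v ∘ φ) atTop (𝓝 z))
    (h₁ : Tendsto (fun j => v (φ j + 1)) atTop (𝓝 z)) : Tendsto v atTop (𝓝 z) := by
  have hanti := antitone_lyapunov hH hρ hM₁ hM₂ hstep
  have hc : Continuous fun p : (d → ℝ) × (d → ℝ) => lyapunov H M₂ ρ z p.1 p.2 := by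
    unfold lyapunov
    fun_prop
  have hφlim : Tendsto (fun j => lyapunov H M₂ ρ z (v (φ j + 1)) (v (φ j))) atTop (𝓝 0) := by
    have h := (hc.tendsto (z, z)).comp (h₁.prodMk_nhds h₀)
    rwa [show lyapunov H M₂ ρ z z z = 0 by simp [lyapunov]] at h
  have hlim := tendsto_atTop_ciInf hanti ⟨0, by
    rintro _ ⟨k, rfl⟩
    exact lyapunov_nonneg hH hρ hM₂ _ _⟩
  rw [tendsto_nhds_unique (hlim.comp hφ.tendsto_atTop) hφlim] at hlim
  have hq : Tendsto (fun k => (v (k + 1) - z) ⬝ᵥ H *ᵥ (v (k + 1) - z)) atTop (𝓝 0) :=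
    squeeze_zero (fun k => hH.dotProduct_mulVec_self_nonneg _)
      (fun k => dotProduct_mulVec_le_lyapunov hρ hM₂ _ _)
      (by simpa using hlim.const_mul (2 / (1 - ρ)))
  exact (tendsto_add_atTop_iff_nat 1).1 (by
    simpa using (hH.tendsto_zero_of_tendsto_dotProduct_mulVec hq).add_const z)

theorem exists_tendsto_of_lyapunov (hH : H.PosDef) (hρ : ρ < 1 / 2) (hM₁ : M₁ = H - M₂ - M₂)
    (hM₂ : ∀ a b, M₂ *ᵥ a ⬝ᵥ b ≤ ρ / 2 * (a ⬝ᵥ H *ᵥ a + b ⬝ᵥ H *ᵥ b)) {Z : Set (d → ℝ)}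
    (hZ : Z.Nonempty) (hstep : ∀ z ∈ Z, ∀ k,
      0 ≤ (M₁ *ᵥ (v (k + 1) - v (k + 2)) + M₂ *ᵥ (v k - v (k + 2))) ⬝ᵥ (v (k + 2) - z))
    {P : (d → ℝ) → Prop} (hPZ : ∀ z, P z → z ∈ Z)
    (hcluster : ∀ z (φ : ℕ → ℕ), StrictMono φ → Tendsto (v ∘ φ) atTop (𝓝 z) →
      Tendsto (fun j => v (φ j + 1)) atTop (𝓝 z) → Tendsto (fun j => v (φ j + 2)) atTop (𝓝 z) →
      P z) :
    ∃ L, Tendsto v atTop (𝓝 L) ∧ P L := by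
  obtain ⟨z₀, hz₀⟩ := hZ
  have hdiff := tendsto_succ_sub_of_lyapunov hH hρ hM₁ hM₂ (hstep z₀ hz₀)
  obtain ⟨z, -, φ, hφ, hlim⟩ := tendsto_subseq_of_bounded
    (isBounded_range_of_lyapunov hH hρ hM₁ hM₂ (hstep z₀ hz₀)) (Set.mem_range_self (f := v))
  have hshift := tendsto_add_of_tendsto_sub hdiff hφ.tendsto_atTop hlim
  have hPz := hcluster z φ hφ hlim (hshift 1) (hshift 2)
  exact ⟨z, tendsto_of_tendsto_subseq_of_lyapunov hH hρ hM₁ hM₂ (hstep z (hPZ z hPz)) hφ hlim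
    (hshift 1), hPz⟩

end Convergence

end TwoStepScheme

section BlockMatrices

variable {A : ∀ i : Fin s, Matrix (Fin m) (Fin (n i)) ℝ} {α : Fin s → ℝ} {β : ℝ}

lemma xpart_elim (x : XIdx n → ℝ) (y : Fin m → ℝ) : xpart (Sum.elim x y) = x := rfl

lemma ypart_elim (x : XIdx n → ℝ) (y : Fin m → ℝ) : ypart (Sum.elim x y) = y := rfl

lemma xpart_sub (u w : FIdx n m → ℝ) : xpart (u - w) = xpart u - xpart w := rfl

lemma ypart_sub (u w : FIdx n m → ℝ) : ypart (u - w) = ypart u - ypart w := rfl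

lemma dotProduct_eq_xpart_add_ypart (u w : FIdx n m → ℝ) :
    u ⬝ᵥ w = xpart u ⬝ᵥ xpart w + ypart u ⬝ᵥ ypart w :=
  Fintype.sum_sum_type _

lemma dotProduct_eq_sum_blk (x x' : XIdx n → ℝ) : x ⬝ᵥ x' = ∑ i, blk x i ⬝ᵥ blk x' i :=
  Fintype.sum_sigma _

lemma bigA_mulVec (x : XIdx n → ℝ) : bigA A *ᵥ x = sumAx A x := by
  ext r
  simp only [mulVec, dotProduct, Fintype.sum_sigma, sumAx, Finset.sum_apply]
  rfl

lemma sumAx_sub (x x' : XIdx n → ℝ) : sumAx A (x - x') = sumAx A x - sumAx A x' := by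
  simp only [← bigA_mulVec, mulVec_sub]

lemma Rmat_mul_Rinv (hα : ∀ i, 0 < α i) (hβ : 0 < β) :
    Rmat (n := n) (m := m) α β * Rinv α β = 1 := by
  rw [Rmat, Rinv, diagonal_mul_diagonal, ← diagonal_one]
  congr 1
  ext (p | r)
  · simp [(hα p.1).ne', hβ.ne']
  · simp [hβ.ne']

lemma Rmat_mul_Emat_sub_one (hα : ∀ i, 0 < α i) (hβ : 0 < β) :
    Rmat α β * (Emat A α β - 1) = SAmat A := by
  rw [Rmat, ← fromBlocks_diagonal, Emat, ← fromBlocks_one, sub_eq_add_neg, fromBlocks_neg,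
    fromBlocks_add, fromBlocks_multiply, SAmat]
  simp only [add_neg_cancel, neg_zero, add_zero, Matrix.mul_zero, Matrix.zero_mul, zero_add]
  refine fromBlocks_inj.2 ⟨rfl, ?_, ?_, rfl⟩
  · ext p r
    have := (hα p.1).ne'
    simp [diagonal_mul]
    field_simp
  · ext r p
    simp [diagonal_mul, hβ.ne']

lemma SAmat_mulVec_dotProduct (z u : FIdx n m → ℝ) :
    SAmat A *ᵥ z ⬝ᵥ u = sumAx A (xpart z) ⬝ᵥ ypart u - ypart z ⬝ᵥ sumAx A (xpart u) := by
  rw [SAmat, fromBlocks_mulVec, dotProduct_eq_xpart_add_ypart]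
  change (0 *ᵥ xpart z + (-(bigA A)ᵀ) *ᵥ ypart z) ⬝ᵥ xpart u
    + (bigA A *ᵥ xpart z + 0 *ᵥ ypart z) ⬝ᵥ ypart u = _
  rw [zero_mulVec, zero_mulVec, zero_add, add_zero, neg_mulVec, neg_dotProduct, mulVec_transpose,
    ← dotProduct_mulVec, bigA_mulVec, bigA_mulVec]
  ring

lemma SAmat_mulVec_dotProduct_self (z : FIdx n m → ℝ) : SAmat A *ᵥ z ⬝ᵥ z = 0 := by
  rw [SAmat_mulVec_dotProduct, dotProduct_comm, sub_self]

lemma Rmat_mulVec_dotProduct (w t : FIdx n m → ℝ) :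
    Rmat α β *ᵥ w ⬝ᵥ t =
      ∑ i, β / α i * (blk (xpart w) i ⬝ᵥ blk (xpart t) i) + β⁻¹ * (ypart w ⬝ᵥ ypart t) := by
  rw [dotProduct_eq_xpart_add_ypart, dotProduct_eq_sum_blk]
  simp only [dotProduct, Finset.mul_sum, xpart, ypart, blk, Rmat, mulVec_diagonal, Sum.elim_inl,
    Sum.elim_inr, one_div, mul_assoc]

end BlockMatrices

section Scheme

variable {f : ∀ i : Fin s, (Fin (n i) → ℝ) → EReal} {A : ∀ i : Fin s, Matrix (Fin m) (Fin (n i)) ℝ}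
  {b : Fin m → ℝ} {α : Fin s → ℝ} {β : ℝ}

/-- The real-valued version of `PhiFun`, meaningful only where `objSum f (xpart v) ≠ ⊤`. -/
def phiReal (f : ∀ i : Fin s, (Fin (n i) → ℝ) → EReal) (b : Fin m → ℝ) (v : FIdx n m → ℝ) : ℝ :=
  objReal f (xpart v) + ypart v ⬝ᵥ b

/-- `w = 𝒯(ζ)` means `R (ζ - w) ∈ ∂Φ(w)`. -/
lemma isT.phiReal_add_le (hf : ∀ i, ProperConvexLsc (f i)) (hα : ∀ i, 0 < α i) (hβ : 0 < β)
    {ζ w : FIdx n m → ℝ} (h : isT f b α β ζ w) :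
    objSum f (xpart w) ≠ ⊤ ∧ ∀ u, objSum f (xpart u) ≠ ⊤ →
      phiReal f b w + Rmat α β *ᵥ (ζ - w) ⬝ᵥ (u - w) ≤ phiReal f b u := by
  have hx := fun i => (isProx_smulF_iff (hf i) (div_pos (hα i) hβ) _ _).1 (h.1 i)
  have hy := (isProx_smulF_iotaCstar_iff b hβ _ _).1 h.2
  refine ⟨(objSum_ne_top_iff hf).2 fun i => (hx i).1, fun u hu => ?_⟩
  rw [objSum_ne_top_iff hf] at hu
  have hblk : ∀ i ∈ Finset.univ, β / α i * (blk (xpart (ζ - w)) i ⬝ᵥ blk (xpart (u - w)) i) ≤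
      (f i (blk (xpart u) i)).toReal - (f i (blk (xpart w) i)).toReal := fun i _ => by
    have := (hx i).2 _ (hu i)
    rw [inv_div] at this
    change β / α i * ((blk (xpart ζ) i - blk (xpart w) i) ⬝ᵥ (blk (xpart u) i - blk (xpart w) i))
      ≤ _
    linarith
  have hyeq : β⁻¹ * (ypart (ζ - w) ⬝ᵥ ypart (u - w)) = ypart u ⬝ᵥ b - ypart w ⬝ᵥ b := by
    change β⁻¹ * ((ypart ζ - ypart w) ⬝ᵥ (ypart u - ypart w)) = _
    rw [hy, smul_dotProduct, smul_eq_mul, inv_mul_cancel_left₀ hβ.ne', dotProduct_comm,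
      sub_dotProduct]
  have hsum := Finset.sum_le_sum hblk
  rw [Finset.sum_sub_distrib] at hsum
  rw [Rmat_mulVec_dotProduct, hyeq, phiReal, phiReal, objReal, objReal]
  linarith

/-- `z = (x, y)` is a saddle point of the Lagrangian `∑ f_i(x_i) - ⟨y, ∑ A_i x_i - b⟩`. -/
def IsSaddlePoint (f : ∀ i : Fin s, (Fin (n i) → ℝ) → EReal)
    (A : ∀ i : Fin s, Matrix (Fin m) (Fin (n i)) ℝ) (b : Fin m → ℝ) (z : FIdx n m → ℝ) : Prop :=
  sumAx A (xpart z) = b ∧ objSum f (xpart z) ≠ ⊤ ∧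
    ∀ x, objSum f x ≠ ⊤ → objReal f (xpart z) - ypart z ⬝ᵥ (sumAx A x - b) ≤ objReal f x

lemma phiReal_sub_sub_SAmat_mulVec_dotProduct (z u : FIdx n m → ℝ) :
    phiReal f b u - phiReal f b z - SAmat A *ᵥ z ⬝ᵥ (u - z) =
      objReal f (xpart u) - objReal f (xpart z) +
        ypart z ⬝ᵥ (sumAx A (xpart u) - sumAx A (xpart z)) +
        (ypart u - ypart z) ⬝ᵥ (b - sumAx A (xpart z)) := by
  rw [SAmat_mulVec_dotProduct, phiReal, phiReal, xpart_sub, ypart_sub, sumAx_sub]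
  simp only [dotProduct_sub, sub_dotProduct, dotProduct_comm (sumAx A (xpart z))]
  ring

/-- Saddle points are the solutions of `0 ∈ ∂Φ(z) + S_A z`. -/
lemma isSaddlePoint_iff {z : FIdx n m → ℝ} :
    IsSaddlePoint f A b z ↔ objSum f (xpart z) ≠ ⊤ ∧ ∀ u, objSum f (xpart u) ≠ ⊤ →
      phiReal f b z + SAmat A *ᵥ z ⬝ᵥ (u - z) ≤ phiReal f b u := by
  constructor
  · rintro ⟨hfeas, hdom, hmin⟩
    refine ⟨hdom, fun u hu => ?_⟩
    have h := phiReal_sub_sub_SAmat_mulVec_dotProduct (f := f) (A := A) (b := b) z u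
    rw [hfeas, sub_self, dotProduct_zero, add_zero] at h
    linarith [hmin _ hu]
  · rintro ⟨hdom, hvi⟩
    have hkey := fun u hu => sub_nonneg.2 (le_sub_iff_add_le'.2 (hvi u hu))
    have hfeas : sumAx A (xpart z) = b := by
      have h := hkey (Sum.elim (xpart z) (ypart z + (sumAx A (xpart z) - b))) hdom
      rw [phiReal_sub_sub_SAmat_mulVec_dotProduct, xpart_elim, ypart_elim, sub_self, sub_self,
        dotProduct_zero, add_sub_cancel_left, ← neg_sub b, neg_dotProduct, zero_add, zero_add,
        neg_nonneg] at h
      exact (sub_eq_zero.1 (dotProduct_self_eq_zero.1 (h.antisymm (dotProduct_self_nonneg _)))).symm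
    refine ⟨hfeas, hdom, fun x hx => ?_⟩
    have h := hkey (Sum.elim x (ypart z)) hx
    rw [phiReal_sub_sub_SAmat_mulVec_dotProduct, xpart_elim, ypart_elim, sub_self,
      zero_dotProduct, add_zero, hfeas] at h
    linarith

lemma IsSaddlePoint.isSolution (hf : ∀ i, ProperConvexLsc (f i)) {z : FIdx n m → ℝ}
    (h : IsSaddlePoint f A b z) : IsSolution f A b (xpart z) := by
  obtain ⟨hfeas, hdom, hmin⟩ := h
  refine ⟨hfeas, fun x hx => ?_⟩
  by_cases hxdom : objSum f x = ⊤
  · rw [hxdom]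
    exact le_top
  have h := hmin x hxdom
  rw [hx, sub_self, dotProduct_zero, sub_zero] at h
  rw [objSum_eq_coe hf ((objSum_ne_top_iff hf).1 hdom),
    objSum_eq_coe hf ((objSum_ne_top_iff hf).1 hxdom)]
  exact EReal.coe_le_coe_iff.2 h

/-- A Lagrange multiplier of (P) turns a solution into a saddle point. -/
lemma exists_isSaddlePoint (hf : ∀ i, ProperConvexLsc (f i)) (hb : RiCond f A b)
    (hsol : ∃ x : XIdx n → ℝ, IsSolution f A b x) : ∃ z, IsSaddlePoint f A b z := by
  obtain ⟨x₀, hfeas, hopt⟩ := hsol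
  obtain ⟨x₁, hx₁, hAx₁⟩ := hb
  have hdom₀ : objSum f x₀ ≠ ⊤ :=
    ne_top_of_le_ne_top (intrinsicInterior_subset hx₁) (hopt x₁ hAx₁)
  obtain ⟨y, hy⟩ := (convexOn_objReal hf).exists_lagrange_multiplier (bigA A).mulVecLin
    ⟨x₁, hx₁, by simpa [bigA_mulVec] using hAx₁⟩ (x₀ := x₀) fun x hx hAx => by
      have h := hopt x (by simpa [bigA_mulVec] using hAx)
      rwa [objSum_eq_coe hf ((objSum_ne_top_iff hf).1 hdom₀),
        objSum_eq_coe hf ((objSum_ne_top_iff hf).1 hx), EReal.coe_le_coe_iff] at h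
  set yv := (dotProductEquiv ℝ (Fin m)).symm y
  have hyv : ∀ w, y w = yv ⬝ᵥ w := fun w => by
    conv_lhs => rw [← (dotProductEquiv ℝ (Fin m)).apply_symm_apply y]
    rfl
  refine ⟨Sum.elim x₀ (-yv), hfeas, hdom₀, fun x hx => ?_⟩
  have h := hy x hx
  rw [Matrix.mulVecLin_apply, hyv, bigA_mulVec] at h
  change objReal f x₀ - (-yv) ⬝ᵥ (sumAx A x - b) ≤ objReal f x
  rw [neg_dotProduct, sub_neg_eq_add]
  exact h

lemma isSaddlePoint_of_isT_Emat (hf : ∀ i, ProperConvexLsc (f i)) (hα : ∀ i, 0 < α i)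
    (hβ : 0 < β) {z : FIdx n m → ℝ} (h : isT f b α β (Emat A α β *ᵥ z) z) :
    IsSaddlePoint f A b z := by
  obtain ⟨hdom, hvi⟩ := h.phiReal_add_le hf hα hβ
  have hR : Rmat α β *ᵥ (Emat A α β *ᵥ z - z) = SAmat A *ᵥ z := by
    rw [← Rmat_mul_Emat_sub_one hα hβ, ← mulVec_mulVec, sub_mulVec, one_mulVec]
  rw [hR] at hvi
  exact isSaddlePoint_iff.2 ⟨hdom, hvi⟩

lemma Rmat_mulVec_isTM_input (hα : ∀ i, 0 < α i) (hβ : 0 < β)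
    {M0 M1 M2 : Matrix (FIdx n m) (FIdx n m) ℝ} (hM : M0 = M1 + M2) (u1 u2 w : FIdx n m → ℝ) :
    Rmat α β *ᵥ ((Emat A α β - Rinv α β * M0) *ᵥ w + (Rinv α β * M1) *ᵥ u1
      + (Rinv α β * M2) *ᵥ u2 - w) = SAmat A *ᵥ w + M1 *ᵥ (u1 - w) + M2 *ᵥ (u2 - w) := by
  have hRE : Rmat α β * Emat A α β = SAmat A + Rmat α β := by
    rw [← Rmat_mul_Emat_sub_one hα hβ, Matrix.mul_sub, Matrix.mul_one, sub_add_cancel]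
  simp only [mulVec_sub, mulVec_add, mulVec_mulVec, hRE, ← Matrix.mul_assoc,
    Rmat_mul_Rinv hα hβ, Matrix.one_mul, sub_mulVec, add_mulVec, hM]
  abel

lemma isTM.dotProduct_nonneg (hf : ∀ i, ProperConvexLsc (f i)) (hα : ∀ i, 0 < α i) (hβ : 0 < β)
    {M0 M1 M2 : Matrix (FIdx n m) (FIdx n m) ℝ} (hM : M0 = M1 + M2) {u1 u2 w z : FIdx n m → ℝ}
    (h : isTM f A b α β M0 M1 M2 u1 u2 w) (hz : IsSaddlePoint f A b z) :
    0 ≤ (M1 *ᵥ (u1 - w) + M2 *ᵥ (u2 - w)) ⬝ᵥ (w - z) := by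
  obtain ⟨hwdom, hvi⟩ := isT.phiReal_add_le hf hα hβ h
  obtain ⟨hzdom, hsad⟩ := isSaddlePoint_iff.1 hz
  have h1 := hvi z hzdom
  have h2 := hsad w hwdom
  rw [Rmat_mulVec_isTM_input hα hβ hM] at h1
  -- the skew part `S_A` drops out when the two inequalities are added
  have hskew : SAmat A *ᵥ w ⬝ᵥ (z - w) + SAmat A *ᵥ z ⬝ᵥ (w - z) = 0 := by
    have := SAmat_mulVec_dotProduct_self (A := A) (w - z)
    rw [mulVec_sub, sub_dotProduct] at this
    rw [← neg_sub w z, dotProduct_neg]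
    linarith
  have hneg : (M1 *ᵥ (u1 - w) + M2 *ᵥ (u2 - w)) ⬝ᵥ (z - w) =
      -((M1 *ᵥ (u1 - w) + M2 *ᵥ (u2 - w)) ⬝ᵥ (w - z)) := by
    rw [← dotProduct_neg, neg_sub]
  rw [add_assoc, add_dotProduct, hneg] at h1
  linarith

lemma isT_of_tendsto (hf : ∀ i, ProperConvexLsc (f i)) (hα : ∀ i, 0 < α i) (hβ : 0 < β)
    {ζ w : ℕ → FIdx n m → ℝ} {ζ₀ w₀ : FIdx n m → ℝ} (h : ∀ k, isT f b α β (ζ k) (w k))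
    (hζ : Tendsto ζ atTop (𝓝 ζ₀)) (hw : Tendsto w atTop (𝓝 w₀)) : isT f b α β ζ₀ w₀ := by
  have hblk : ∀ i, Continuous fun v : FIdx n m → ℝ => blk (xpart v) i := fun i =>
    continuous_pi fun j => continuous_apply _
  have hy : Continuous fun v : FIdx n m → ℝ => ypart v := continuous_pi fun r => continuous_apply _
  refine ⟨fun i => isProx_smulF_of_tendsto (hf i) (div_pos (hα i) hβ) (fun k => (h k).1 i)
    ((hblk i).tendsto _ |>.comp hζ) ((hblk i).tendsto _ |>.comp hw), ?_⟩
  rw [isProx_smulF_iotaCstar_iff b hβ]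
  refine tendsto_nhds_unique (((hy.tendsto _).comp hζ).sub ((hy.tendsto _).comp hw)) ?_
  simp only [Function.comp_def, fun k => (isProx_smulF_iotaCstar_iff b hβ _ _).1 (h k).2]
  exact tendsto_const_nhds

lemma isT_Emat_of_tendsto (hf : ∀ i, ProperConvexLsc (f i)) (hα : ∀ i, 0 < α i) (hβ : 0 < β)
    {M0 M1 M2 : Matrix (FIdx n m) (FIdx n m) ℝ} (hM : M0 = M1 + M2) {u1 u2 w : ℕ → FIdx n m → ℝ}
    (h : ∀ k, isTM f A b α β M0 M1 M2 (u1 k) (u2 k) (w k)) {z : FIdx n m → ℝ}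
    (h1 : Tendsto u1 atTop (𝓝 z)) (h2 : Tendsto u2 atTop (𝓝 z)) (hw : Tendsto w atTop (𝓝 z)) :
    isT f b α β (Emat A α β *ᵥ z) z := by
  have hmv : ∀ (N : Matrix (FIdx n m) (FIdx n m) ℝ) {x : ℕ → FIdx n m → ℝ},
      Tendsto x atTop (𝓝 z) → Tendsto (fun k => N *ᵥ x k) atTop (𝓝 (N *ᵥ z)) := fun N x hx =>
    ((continuous_const.matrix_mulVec continuous_id).tendsto z).comp hx
  have hE : (Emat A α β - Rinv α β * M0) *ᵥ z + (Rinv α β * M1) *ᵥ z + (Rinv α β * M2) *ᵥ z =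
      Emat A α β *ᵥ z := by
    simp only [hM, Matrix.mul_add, sub_mulVec, add_mulVec]
    abel
  refine isT_of_tendsto hf hα hβ h ?_ hw
  rw [← hE]
  exact ((hmv _ hw).add (hmv _ h1)).add (hmv _ h2)

end Scheme

theorem scheme_converges_to_solution_general {s m : ℕ} {n : Fin s → ℕ}
    (f : ∀ i : Fin s, (Fin (n i) → ℝ) → EReal)
    (A : ∀ i : Fin s, Matrix (Fin m) (Fin (n i)) ℝ) (b : Fin m → ℝ)
    (hf : ∀ i, ProperConvexLsc (f i))
    (hb : RiCond f A b)
    (hsol : ∃ x : XIdx n → ℝ, IsSolution f A b x)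
    (α : Fin s → ℝ) (hα : ∀ i, 0 < α i) (β : ℝ) (hβ : 0 < β)
    (M0 M1 M2 : Matrix (FIdx n m) (FIdx n m) ℝ)
    (hM : ConditionM M0 M1 M2)
    (v : ℕ → FIdx n m → ℝ)
    (hrec : ∀ k : ℕ, isTM f A b α β M0 M1 M2 (v (k + 1)) (v k) (v (k + 2))) :
    ∃ L : FIdx n m → ℝ, Tendsto v atTop (nhds L) ∧
      isT f b α β ((Emat A α β).mulVec L) L ∧
      IsSolution f A b (xpart L) := by
  obtain ⟨hM012, hH, hρ⟩ := hM
  obtain ⟨L, hL, hfix⟩ := exists_tendsto_of_lyapunov hH hρ (by rw [hM012]; abel)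
    (hH.mulVec_dotProduct_le M2) (Z := {z | IsSaddlePoint f A b z})
    (exists_isSaddlePoint hf hb hsol)
    (fun z hz k => (hrec k).dotProduct_nonneg hf hα hβ hM012 hz)
    (P := fun z => isT f b α β (Emat A α β *ᵥ z) z)
    (fun z hz => isSaddlePoint_of_isT_Emat hf hα hβ hz)
    (fun z φ _ h₀ h₁ h₂ => isT_Emat_of_tendsto hf hα hβ hM012 (fun j => hrec (φ j)) h₁ h₀ h₂)
  exact ⟨L, hL, hfix, (isSaddlePoint_of_isT_Emat hf hα hβ hfix).isSolution hf⟩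

/-- under Condition-M, the two-step scheme `v^{k+1} = T_ℳ(v^k, v^{k−1})`
converges to a fixed point of `𝒯 ∘ E`, and the `x`-part converges to a solution of (P). -/
theorem scheme_converges_to_solution {s m : ℕ} {n : Fin s → ℕ}
    (f : ∀ i : Fin s, (Fin (n i) → ℝ) → EReal)
    (A : ∀ i : Fin s, Matrix (Fin m) (Fin (n i)) ℝ) (b : Fin m → ℝ)
    (hf : ∀ i, ProperConvexLsc (f i))
    (hb : RiCond f A b)
    (hsol : ∃ x : XIdx n → ℝ, IsSolution f A b x)
    (α : Fin s → ℝ) (hα : ∀ i, 0 < α i) (β : ℝ) (hβ : 0 < β)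
    (M0 M1 M2 : Matrix (FIdx n m) (FIdx n m) ℝ)
    (hwd : TMWellDefined f A b α β M0 M1 M2)
    (hM : ConditionM M0 M1 M2)
    (v : ℕ → FIdx n m → ℝ)
    (hrec : ∀ k : ℕ, isTM f A b α β M0 M1 M2 (v (k + 1)) (v k) (v (k + 2))) :
    ∃ L : FIdx n m → ℝ, Tendsto v atTop (nhds L) ∧
      isT f b α β ((Emat A α β).mulVec L) L ∧
      IsSolution f A b (xpart L) :=
  scheme_converges_to_solution_general f A b hf hb hsol α hα β hβ M0 M1 M2 hM v hrec
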